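/- arXiv:1508.00268 — 2 statements merged into one kernel-verified Lean document; each statement's English description precedes it below -/
import Mathlib

section
/- Let Γ be a finitely generated submonoid of a finitely generated free abelian group Λ with ℤΓ = Λ, and let K be the dual cone. Let ρ1, ρ2 ∈ K be extremal ray generators of K with ℚ≥0·ρ1 ≠ ℚ≥0·ρ2, and suppose α ∈ Λ ⊗_ℤ ℚ satisfies ρ1(α) = ρ2(α) = 1 and ρ(α) ≤ 0 for every extremal ray generator ρ of K with ℚ≥0·ρ ∉ {ℚ≥0·ρ1, ℚ≥0·ρ2}. Then ℚ≥0·ρ1 + ℚ≥0·ρ2 is a face of K; that is, there exists ν ∈ ℚ≥0Γ such that ℚ≥0·ρ1 + ℚ≥0·ρ2 = {ξ ∈ K : ξ(ν) = 0}. -/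
/-- The convex cone `ℚ≥0Γ` generated by a submonoid `Γ` of a `ℚ`-vector space `V`:
all finite nonnegative rational combinations of elements of `Γ`. -/
def qCone {V : Type*} [AddCommGroup V] [Module ℚ V] (Γ : AddSubmonoid V) : Set V :=
  {v | ∃ (s : Finset V) (c : V → ℚ), (∀ x ∈ s, x ∈ Γ ∧ 0 ≤ c x) ∧ v = ∑ x ∈ s, c x • x}

/-- The ray `ℚ≥0·ρ` spanned by an element `ρ` of a `ℚ`-vector space. -/
def rayGen {W : Type*} [AddCommGroup W] [Module ℚ W] (ρ : W) : Set W :=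
  {x | ∃ c : ℚ, 0 ≤ c ∧ x = c • ρ}

/-- `ρ` is an extremal ray generator of the convex cone `K`: `ρ` is a nonzero element of `K`
and whenever `x, y ∈ K` with `x + y ∈ ℚ≥0·ρ`, both `x` and `y` lie in `ℚ≥0·ρ`. -/
def IsExtremalRayGen {W : Type*} [AddCommGroup W] [Module ℚ W] (K : Set W) (ρ : W) : Prop :=
  ρ ∈ K ∧ ρ ≠ 0 ∧ ∀ x ∈ K, ∀ y ∈ K, x + y ∈ rayGen ρ → x ∈ rayGen ρ ∧ y ∈ rayGen ρ

set_option linter.unusedSectionVars false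

namespace TwoRaysAux

open Module Finset

variable {V : Type*} [AddCommGroup V] [Module ℚ V] [FiniteDimensional ℚ V]
variable {m : ℕ}

/-- The polyhedral cone cut out by the evaluation functionals at `g i`. -/
def Kg (g : Fin m → V) : Set (Module.Dual ℚ V) := {ξ | ∀ i, 0 ≤ ξ (g i)}

/-- The space of directions preserving the constraints tight at `ξ`. -/
def Zg (g : Fin m → V) (ξ : Module.Dual ℚ V) : Submodule ℚ (Module.Dual ℚ V) where
  carrier := {η | ∀ i, ξ (g i) = 0 → η (g i) = 0}
  add_mem' := by
    intro a b ha hb i hi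
    simp [LinearMap.add_apply, ha i hi, hb i hi]
  zero_mem' := by intro i _; rfl
  smul_mem' := by
    intro c a ha i hi
    simp [LinearMap.smul_apply, ha i hi]

lemma mem_Zg_self (g : Fin m → V) (ξ : Module.Dual ℚ V) : ξ ∈ Zg g ξ := fun _ hi => hi

lemma mem_Zg_iff {g : Fin m → V} {ξ η : Module.Dual ℚ V} :
    η ∈ Zg g ξ ↔ ∀ i, ξ (g i) = 0 → η (g i) = 0 := Iff.rfl

lemma eval_inj {g : Fin m → V} (hg : Submodule.span ℚ (Set.range g) = ⊤)
    {η : Module.Dual ℚ V} (h : ∀ i, η (g i) = 0) : η = 0 := by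
  apply LinearMap.ext_on hg
  rintro x ⟨i, rfl⟩
  simpa using h i

lemma exists_pos_eval {g : Fin m → V} (hg : Submodule.span ℚ (Set.range g) = ⊤)
    {ξ : Module.Dual ℚ V} (hξ : ξ ∈ Kg g) (hne : ξ ≠ 0) : ∃ i, 0 < ξ (g i) := by
  by_contra h
  push_neg at h
  exact hne (eval_inj hg fun i => le_antisymm (h i) (hξ i))

lemma Kg_zero (g : Fin m → V) : (0 : Module.Dual ℚ V) ∈ Kg g := fun _ => le_refl _

lemma Kg_add {g : Fin m → V} {ξ η : Module.Dual ℚ V} (hξ : ξ ∈ Kg g) (hη : η ∈ Kg g) :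
    ξ + η ∈ Kg g := fun i => by
  have := add_nonneg (hξ i) (hη i); simpa using this

lemma Kg_smul {g : Fin m → V} {c : ℚ} (hc : 0 ≤ c) {ξ : Module.Dual ℚ V} (hξ : ξ ∈ Kg g) :
    c • ξ ∈ Kg g := fun i => by
  have := mul_nonneg hc (hξ i); simpa using this

lemma self_mem_rayGen {W : Type*} [AddCommGroup W] [Module ℚ W] (ρ : W) : ρ ∈ rayGen ρ :=
  ⟨1, zero_le_one, (one_smul _ _).symm⟩

lemma rayGen_smul {W : Type*} [AddCommGroup W] [Module ℚ W] {c : ℚ} (hc : 0 < c) (ρ : W) :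
    rayGen (c • ρ) = rayGen ρ := by
  ext x
  constructor
  · rintro ⟨a, ha, rfl⟩
    exact ⟨a * c, mul_nonneg ha hc.le, smul_smul a c ρ⟩
  · rintro ⟨a, ha, rfl⟩
    exact ⟨a / c, div_nonneg ha hc.le, by rw [smul_smul, div_mul_cancel₀ _ hc.ne']⟩

lemma mem_rayGen_iff {W : Type*} [AddCommGroup W] [Module ℚ W] {ρ x : W} :
    x ∈ rayGen ρ ↔ ∃ c : ℚ, 0 ≤ c ∧ x = c • ρ := Iff.rfl

lemma extremal_smul {g : Fin m → V} {c : ℚ} (hc : 0 < c) {ρ : Module.Dual ℚ V}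
    (hρ : IsExtremalRayGen (Kg g) ρ) : IsExtremalRayGen (Kg g) (c • ρ) := by
  refine ⟨Kg_smul hc.le hρ.1, smul_ne_zero hc.ne' hρ.2.1, ?_⟩
  intro x hx y hy hxy
  rw [rayGen_smul hc] at hxy ⊢
  exact hρ.2.2 x hx y hy hxy



lemma Zg_zero_rank {g : Fin m → V} (hg : Submodule.span ℚ (Set.range g) = ⊤) :
    Zg g (0 : Module.Dual ℚ V) = ⊥ := by
  rw [eq_bot_iff]
  intro η hη
  have : η = 0 := eval_inj hg fun i => hη i rfl
  simp [this]

lemma zero_of_finrank_zero {g : Fin m → V} {ξ : Module.Dual ℚ V}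
    (h : Module.finrank ℚ (Zg g ξ) = 0) : ξ = 0 := by
  have hb : Zg g ξ = ⊥ := Submodule.finrank_eq_zero.mp h
  have := mem_Zg_self g ξ
  rw [hb] at this
  simpa using this

lemma extremal_of_rank_one {g : Fin m → V} (hg : Submodule.span ℚ (Set.range g) = ⊤)
    {ξ : Module.Dual ℚ V} (hξ : ξ ∈ Kg g) (h1 : Module.finrank ℚ (Zg g ξ) = 1) :
    IsExtremalRayGen (Kg g) ξ := by
  have hξne : ξ ≠ 0 := by
    rintro rfl
    rw [Zg_zero_rank hg] at h1
    simp at h1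
  have hle : (ℚ ∙ ξ) ≤ Zg g ξ := by
    rw [Submodule.span_singleton_le_iff_mem]; exact mem_Zg_self g ξ
  have hZeq : (ℚ ∙ ξ) = Zg g ξ := by
    apply Submodule.eq_of_le_of_finrank_le hle
    rw [h1, finrank_span_singleton hξne]
  obtain ⟨i₀, hi₀⟩ := exists_pos_eval hg hξ hξne
  refine ⟨hξ, hξne, ?_⟩
  intro x hx y hy hxy
  obtain ⟨c, hc, hcx⟩ := hxy
  rcases eq_or_lt_of_le hc with rfl | hcpos
  · -- x + y = 0, so x = y = 0
    have hxy0 : x + y = 0 := by simpa using hcx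
    have hx0 : x = 0 := by
      apply eval_inj hg
      intro i
      have h1 : x (g i) + y (g i) = 0 := by
        have := congrArg (fun η : Module.Dual ℚ V => η (g i)) hxy0
        simpa using this
      have := hx i; have := hy i
      linarith
    have hy0 : y = 0 := by
      rw [hx0, zero_add] at hxy0; exact hxy0
    exact ⟨⟨0, le_refl 0, by simp [hx0]⟩, ⟨0, le_refl 0, by simp [hy0]⟩⟩
  · have key : ∀ z : Module.Dual ℚ V, z ∈ Kg g → (∀ i, x (g i) + y (g i) = c * ξ (g i)) →
        z ∈ Zg g ξ → z ∈ rayGen ξ := by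
      intro z hzK _ hzZ
      rw [← hZeq] at hzZ
      obtain ⟨a, ha⟩ := Submodule.mem_span_singleton.mp hzZ
      have haeq : z = a • ξ := ha.symm
      have hz0 : 0 ≤ a := by
        have hz := hzK i₀
        rw [haeq] at hz
        simp only [LinearMap.smul_apply, smul_eq_mul] at hz
        nlinarith
      exact ⟨a, hz0, haeq⟩
    have heval : ∀ i, x (g i) + y (g i) = c * ξ (g i) := by
      intro i
      have := congrArg (fun η : Module.Dual ℚ V => η (g i)) hcx
      simpa using this
    have hxZ : x ∈ Zg g ξ := by
      intro i hi
      have h1 := heval i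
      rw [hi] at h1
      have := hx i; have := hy i
      linarith
    have hyZ : y ∈ Zg g ξ := by
      intro i hi
      have h1 := heval i
      rw [hi] at h1
      have := hx i; have := hy i
      linarith
    exact ⟨key x hx heval hxZ, key y hy heval hyZ⟩

lemma Zg_lt (g : Fin m → V) {ξ ξ' e : Module.Dual ℚ V}
    (hsub : ∀ i, ξ (g i) = 0 → ξ' (g i) = 0) {i₁ : Fin m} (hi₁ : ξ' (g i₁) = 0)
    (heZ : e ∈ Zg g ξ) (hei₁ : e (g i₁) ≠ 0) :
    Module.finrank ℚ (Zg g ξ') < Module.finrank ℚ (Zg g ξ) := by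
  apply Submodule.finrank_lt_finrank_of_lt
  rw [SetLike.lt_iff_le_and_exists]
  constructor
  · intro η hη i hi
    exact hη i (hsub i hi)
  · exact ⟨e, heZ, fun h => hei₁ (h i₁ hi₁)⟩

lemma move (g : Fin m → V) {ξ e : Module.Dual ℚ V} (hξ : ξ ∈ Kg g)
    (he : e ∈ Zg g ξ) (hneg : ∃ i, e (g i) < 0) :
    ∃ t : ℚ, 0 < t ∧ ξ + t • e ∈ Kg g ∧ ∃ i₁, e (g i₁) < 0 ∧ (ξ + t • e) (g i₁) = 0 := by
  classical
  set S : Finset (Fin m) := Finset.univ.filter (fun i => e (g i) < 0) with hS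
  have hSne : S.Nonempty := by
    obtain ⟨i, hi⟩ := hneg
    exact ⟨i, by simp [hS, hi]⟩
  have hmemS : ∀ i ∈ S, e (g i) < 0 := by
    intro i hi; simpa [hS] using hi
  have hposS : ∀ i ∈ S, 0 < ξ (g i) := by
    intro i hi
    rcases lt_or_eq_of_le (hξ i) with h | h
    · exact h
    · exact absurd (he i h.symm) (ne_of_lt (hmemS i hi))
  set f : Fin m → ℚ := fun i => ξ (g i) / (-(e (g i))) with hf
  set t : ℚ := S.inf' hSne f with ht
  have htpos : 0 < t := by
    rw [ht, Finset.lt_inf'_iff]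
    intro i hi
    exact div_pos (hposS i hi) (by linarith [hmemS i hi])
  refine ⟨t, htpos, ?_, ?_⟩
  · intro i
    simp only [LinearMap.add_apply, LinearMap.smul_apply, smul_eq_mul]
    rcases le_or_gt 0 (e (g i)) with h | h
    · have := hξ i
      nlinarith
    · have hiS : i ∈ S := by simp [hS, h]
      have hle : t ≤ f i := Finset.inf'_le f hiS
      rw [hf] at hle
      have hepos : 0 < -(e (g i)) := by linarith
      rw [le_div_iff₀ hepos] at hle
      nlinarith
  · obtain ⟨i₁, hi₁S, hi₁eq⟩ := Finset.exists_mem_eq_inf' hSne f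
    refine ⟨i₁, hmemS i₁ hi₁S, ?_⟩
    simp only [LinearMap.add_apply, LinearMap.smul_apply, smul_eq_mul]
    rw [ht, hi₁eq, hf]
    have h1 : e (g i₁) ≠ 0 := ne_of_lt (hmemS i₁ hi₁S)
    show ξ (g i₁) + ξ (g i₁) / -e (g i₁) * e (g i₁) = 0
    rw [div_mul_eq_mul_div, div_neg, mul_div_cancel_right₀ _ h1, add_neg_cancel]

/-- The additive monoid generated by the extremal ray generators of `Kg g`. -/
def Mg (g : Fin m → V) : AddSubmonoid (Module.Dual ℚ V) :=
  AddSubmonoid.closure {ρ | IsExtremalRayGen (Kg g) ρ}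

lemma smul_mem_Mg {g : Fin m → V} {c : ℚ} (hc : 0 ≤ c) {η : Module.Dual ℚ V}
    (hη : η ∈ Mg g) : c • η ∈ Mg g := by
  induction hη using AddSubmonoid.closure_induction with
  | mem ρ hρ =>
    rcases eq_or_lt_of_le hc with rfl | hcpos
    · simp [AddSubmonoid.zero_mem]
    · exact AddSubmonoid.subset_closure (extremal_smul hcpos hρ)
  | zero => simp [AddSubmonoid.zero_mem]
  | add a b _ _ ha hb =>
    rw [smul_add]
    exact AddSubmonoid.add_mem _ ha hb



set_option maxHeartbeats 1000000 in
lemma decompose {g : Fin m → V} (hg : Submodule.span ℚ (Set.range g) = ⊤) :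
    ∀ ξ ∈ Kg g, ξ ∈ Mg g := by
  suffices h : ∀ n : ℕ, ∀ ξ ∈ Kg g, Module.finrank ℚ (Zg g ξ) ≤ n → ξ ∈ Mg g by
    intro ξ hξ; exact h _ ξ hξ le_rfl
  intro n
  induction n with
  | zero =>
    intro ξ hξ hr
    have h0 : ξ = 0 := zero_of_finrank_zero (Nat.le_zero.mp hr)
    rw [h0]; exact AddSubmonoid.zero_mem _
  | succ n ih =>
    intro ξ hξ hrank
    rcases le_or_gt (Module.finrank ℚ (Zg g ξ)) n with h | h
    · exact ih ξ hξ h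
    have hrk : Module.finrank ℚ (Zg g ξ) = n + 1 := le_antisymm hrank h
    have hξne : ξ ≠ 0 := by
      rintro rfl
      rw [Zg_zero_rank hg] at hrk
      simp at hrk
    rcases Nat.eq_zero_or_pos n with rfl | hn
    · exact AddSubmonoid.subset_closure (extremal_of_rank_one hg hξ hrk)
    have key : ∀ d : Module.Dual ℚ V, d ∈ Zg g ξ → d ∉ (ℚ ∙ ξ) →
        (∃ i, d (g i) < 0) → ξ ∈ Mg g := by
      intro d hdZ hdns hneg
      obtain ⟨tp, htp, hxpK, i₁, hi₁neg, hi₁tight⟩ := move g hξ hdZ hneg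
      set ξp := ξ + tp • d with hξp
      have hsubp : ∀ i, ξ (g i) = 0 → ξp (g i) = 0 := by
        intro i hi
        have hd := hdZ i hi
        simp [hξp, LinearMap.add_apply, LinearMap.smul_apply, hi, hd]
      have hrankp : Module.finrank ℚ (Zg g ξp) ≤ n := by
        have := Zg_lt g hsubp hi₁tight hdZ (ne_of_lt hi₁neg)
        omega
      have hξpM : ξp ∈ Mg g := ih ξp hxpK hrankp
      by_cases hpos : ∃ i, 0 < d (g i)
      · obtain ⟨j, hj⟩ := hpos
        have hnegneg : ∃ i, (-d) (g i) < 0 := ⟨j, by simpa using hj⟩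
        have hmdZ : -d ∈ Zg g ξ := neg_mem hdZ
        obtain ⟨tm, htm, hxmK, i₂, hi₂neg, hi₂tight⟩ := move g hξ hmdZ hnegneg
        set ξm := ξ + tm • (-d) with hξm
        have hsubm : ∀ i, ξ (g i) = 0 → ξm (g i) = 0 := by
          intro i hi
          have hd := hdZ i hi
          simp [hξm, LinearMap.add_apply, LinearMap.smul_apply, hi, hd]
        have hrankm : Module.finrank ℚ (Zg g ξm) ≤ n := by
          have := Zg_lt g hsubm hi₂tight hmdZ (ne_of_lt hi₂neg)
          omega
        have hξmM : ξm ∈ Mg g := ih ξm hxmK hrankm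
        have hne2 : tp + tm ≠ 0 := by positivity
        have hsum : ξ = (tm / (tp + tm)) • ξp + (tp / (tp + tm)) • ξm := by
          rw [hξp, hξm]
          match_scalars <;> field_simp <;> ring
        rw [hsum]
        exact AddSubmonoid.add_mem _
          (smul_mem_Mg (div_pos htm (by linarith)).le hξpM)
          (smul_mem_Mg (div_pos htp (by linarith)).le hξmM)
      · push_neg at hpos
        have hmdK : -d ∈ Kg g := by
          intro i
          simpa using hpos i
        rcases le_or_gt (Module.finrank ℚ (Zg g (-d))) n with hrd | hrd
        · have h1 := ih _ hmdK hrd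
          have hsum : ξ = ξp + tp • (-d) := by
            rw [hξp]; module
          rw [hsum]
          exact AddSubmonoid.add_mem _ hξpM (smul_mem_Mg htp.le h1)
        · have hle : Zg g (-d) ≤ Zg g ξ := by
            intro η hη i hi
            apply hη i
            have := hdZ i hi
            simp [this]
          have heq : Zg g (-d) = Zg g ξ :=
            Submodule.eq_of_le_of_finrank_le hle (by omega)
          have hξZd : ξ ∈ Zg g (-d) := by rw [heq]; exact mem_Zg_self g ξ
          have hmξZ : -ξ ∈ Zg g (-d) := neg_mem hξZd
          have hnegξ : ∃ i, (-ξ) (g i) < 0 := by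
            obtain ⟨i, hi⟩ := exists_pos_eval hg hξ hξne
            exact ⟨i, by simpa using hi⟩
          obtain ⟨t₀, ht₀, hzK, i₃, hi₃neg, hi₃tight⟩ := move g hmdK hmξZ hnegξ
          set z := -d + t₀ • (-ξ) with hz
          have hsubz : ∀ i, (-d) (g i) = 0 → z (g i) = 0 := by
            intro i hi
            have hxi : ξ (g i) = 0 := hξZd i hi
            simp only [hz, LinearMap.add_apply, LinearMap.smul_apply, LinearMap.neg_apply,
              smul_eq_mul, hxi, mul_zero, neg_zero, add_zero]
            simpa using hi
          have hrz : Module.finrank ℚ (Zg g z) ≤ n := by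
            have hlt := Zg_lt g hsubz hi₃tight hmξZ (ne_of_lt hi₃neg)
            rw [heq] at hlt
            omega
          have hzM : z ∈ Mg g := ih _ hzK hrz
          set c := tp * t₀ with hc
          rcases lt_or_ge c 1 with hc1 | hc1
          · have hpos1 : (0:ℚ) < 1 - c := by linarith
            have h1c : (1:ℚ) - c ≠ 0 := ne_of_gt hpos1
            have hsum : ξ = ((1 - c)⁻¹) • ξp + ((1 - c)⁻¹ * tp) • z := by
              rw [hξp, hz, hc]
              match_scalars <;> field_simp [show (1:ℚ) - tp * t₀ ≠ 0 from h1c] <;> ring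
            rw [hsum]
            exact AddSubmonoid.add_mem _
              (smul_mem_Mg (inv_pos.mpr hpos1).le hξpM)
              (smul_mem_Mg (mul_pos (inv_pos.mpr hpos1) htp).le hzM)
          · exfalso
            have hzero : ξp + tp • z + (c - 1) • ξ = 0 := by
              rw [hξp, hz, hc]; module
            have hξp0 : ξp = 0 := by
              apply eval_inj hg
              intro i
              have h1 : ξp (g i) + tp * z (g i) + (c - 1) * ξ (g i) = 0 := by
                have := congrArg (fun η : Module.Dual ℚ V => η (g i)) hzero
                simpa using this
              have h2 := hxpK i
              have h3 := hzK i
              have h4 := hξ i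
              nlinarith [mul_nonneg htp.le h3,
                mul_nonneg (by linarith : (0:ℚ) ≤ c - 1) h4]
            apply hdns
            apply Submodule.mem_span_singleton.mpr
            refine ⟨-tp⁻¹, ?_⟩
            rw [hξp] at hξp0
            have h7 : ξ = -(tp • d) := add_eq_zero_iff_eq_neg.mp hξp0
            rw [h7, smul_neg, neg_smul, neg_neg, smul_smul,
              inv_mul_cancel₀ htp.ne', one_smul]
    have hspanlt : (ℚ ∙ ξ) < Zg g ξ := by
      apply lt_of_le_of_ne
      · rw [Submodule.span_singleton_le_iff_mem]; exact mem_Zg_self g ξ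
      · intro hEq
        have hfr := finrank_span_singleton (K := ℚ) hξne
        rw [hEq, hrk] at hfr
        omega
    obtain ⟨d, hdZ, hdns⟩ := SetLike.exists_of_lt hspanlt
    have hdne0 : d ≠ 0 := fun hd0 => hdns (hd0 ▸ Submodule.zero_mem _)
    by_cases hneg : ∃ i, d (g i) < 0
    · exact key d hdZ hdns hneg
    · push_neg at hneg
      have hdsome : ∃ i, d (g i) ≠ 0 := by
        by_contra hall
        push_neg at hall
        exact hdne0 (eval_inj hg hall)
      obtain ⟨i, hi⟩ := hdsome
      have hipos : 0 < d (g i) := lt_of_le_of_ne (hneg i) (Ne.symm hi)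
      refine key (-d) (neg_mem hdZ) ?_ ⟨i, by simpa using hipos⟩
      intro hmem
      exact hdns (by simpa using neg_mem hmem)



/-- Farkas' lemma over `ℚ`: if every functional nonnegative on all `g i` is nonnegative
on `v`, then `v` is a nonnegative combination of the `g i`. -/
lemma farkas : ∀ (m : ℕ) (g : Fin m → V) (v : V),
    (∀ ξ : Module.Dual ℚ V, (∀ i, 0 ≤ ξ (g i)) → 0 ≤ ξ v) →
    ∃ lam : Fin m → ℚ, (∀ i, 0 ≤ lam i) ∧ v = ∑ i, lam i • g i := by
  intro m
  induction m with
  | zero =>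
    intro g v hv
    have hv0 : v = 0 := by
      rw [← Module.forall_dual_apply_eq_zero_iff ℚ v]
      intro φ
      have h1 := hv φ (fun i => i.elim0)
      have h2 := hv (-φ) (fun i => i.elim0)
      simp only [LinearMap.neg_apply] at h2
      linarith
    exact ⟨fun i => 0, fun i => le_refl 0, by simp [hv0]⟩
  | succ n ih =>
    intro g v hv
    by_cases hyp : ∀ ξ : Module.Dual ℚ V, (∀ i : Fin n, 0 ≤ ξ (g i.succ)) → 0 ≤ ξ v
    · obtain ⟨lam, hlam, hsum⟩ := ih (fun i => g i.succ) v hyp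
      refine ⟨Fin.cons 0 lam, ?_, ?_⟩
      · intro i
        induction i using Fin.cases with
        | zero => simp
        | succ j => simpa using hlam j
      · rw [Fin.sum_univ_succ]
        simpa using hsum
    · push_neg at hyp
      obtain ⟨η, hη, hηv⟩ := hyp
      have hη0 : η (g 0) < 0 := by
        by_contra hcon
        push_neg at hcon
        have : ∀ i : Fin (n+1), 0 ≤ η (g i) := by
          intro i
          induction i using Fin.cases with
          | zero => exact hcon
          | succ j => exact hη j
        linarith [hv η this]
      have hη0ne : η (g 0) ≠ 0 := ne_of_lt hη0
      -- project everything into the hyperplane η = 0 along g 0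
      set q : ℚ := (η (g 0))⁻¹ with hq
      set g' : Fin n → V := fun i => g i.succ - (q * η (g i.succ)) • g 0 with hg'
      set v' : V := v - (q * η v) • g 0 with hv'
      have hIH : ∀ ξ : Module.Dual ℚ V, (∀ i, 0 ≤ ξ (g' i)) → 0 ≤ ξ v' := by
        intro ξ hξ
        set ζ : Module.Dual ℚ V := ξ - (q * ξ (g 0)) • η with hζ
        have hζ0 : ζ (g 0) = 0 := by
          simp only [hζ, LinearMap.sub_apply, LinearMap.smul_apply, smul_eq_mul, hq]
          field_simp
          ring
        have hζi : ∀ i : Fin n, ζ (g i.succ) = ξ (g' i) := by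
          intro i
          simp only [hζ, hg', LinearMap.sub_apply, LinearMap.smul_apply, smul_eq_mul,
            map_sub, map_smul]
          ring
        have hζv : ζ v = ξ v' := by
          simp only [hζ, hv', LinearMap.sub_apply, LinearMap.smul_apply, smul_eq_mul,
            map_sub, map_smul]
          ring
        have hζK : ∀ i : Fin (n+1), 0 ≤ ζ (g i) := by
          intro i
          induction i using Fin.cases with
          | zero => rw [hζ0]
          | succ j => rw [hζi j]; exact hξ j
        have := hv ζ hζK
        rwa [hζv] at this
      obtain ⟨lam, hlam, hsum⟩ := ih g' v' hIH
      set c0 : ℚ := q * η v - ∑ i, lam i * (q * η (g i.succ)) with hc0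
      have hc0pos : 0 ≤ c0 := by
        have hqneg : q < 0 := inv_neg''.mpr hη0
        have hsumnn : 0 ≤ ∑ i, lam i * η (g i.succ) :=
          Finset.sum_nonneg fun i _ => mul_nonneg (hlam i) (hη i)
        have hrw : c0 = q * (η v - ∑ i, lam i * η (g i.succ)) := by
          rw [hc0, mul_sub, Finset.mul_sum]
          congr 1
          exact Finset.sum_congr rfl fun i _ => by ring
        rw [hrw]
        have : η v - ∑ i, lam i * η (g i.succ) < 0 := by linarith
        nlinarith
      refine ⟨Fin.cons c0 lam, ?_, ?_⟩
      · intro i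
        induction i using Fin.cases with
        | zero => simpa using hc0pos
        | succ j => simpa using hlam j
      · rw [Fin.sum_univ_succ]
        simp only [Fin.cons_zero, Fin.cons_succ]
        have hexp : v' = ∑ i, lam i • g i.succ - (∑ i, lam i * (q * η (g i.succ))) • g 0 := by
          rw [hsum]
          simp only [hg', smul_sub, smul_smul]
          rw [Finset.sum_sub_distrib, Finset.sum_smul]
        rw [hv'] at hexp
        have : v = ∑ i, lam i • g i.succ - (∑ i, lam i * (q * η (g i.succ))) • g 0
            + (q * η v) • g 0 := by
          rw [← hexp]; module
        rw [this, hc0]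
        rw [sub_smul]
        module



end TwoRaysAux

open TwoRaysAux in
set_option maxHeartbeats 2000000 in
/-- Let `Γ` be a finitely generated submonoid of a finitely generated free
abelian group `Λ` with `ℤΓ = Λ`, and let `K` be the dual cone.  (We realize `Λ ⊗_ℤ ℚ` as a
`ℚ`-vector space `V` in which `Γ` spans, so that `Hom_ℤ(Λ, ℚ)` identifies with the dual space
of `V`.)  Let `ρ₁, ρ₂ ∈ K` be extremal ray generators of `K` with `ℚ≥0·ρ₁ ≠ ℚ≥0·ρ₂`, and
suppose `α ∈ Λ ⊗ ℚ` satisfies `ρ₁(α) = ρ₂(α) = 1` and `ρ(α) ≤ 0` for every extremal ray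
generator `ρ` of `K` with `ℚ≥0·ρ ∉ {ℚ≥0·ρ₁, ℚ≥0·ρ₂}`.  Then `ℚ≥0·ρ₁ + ℚ≥0·ρ₂` is a face
of `K`: there exists `ν ∈ ℚ≥0Γ` with `ℚ≥0·ρ₁ + ℚ≥0·ρ₂ = {ξ ∈ K : ξ(ν) = 0}`. -/
theorem two_extremal_rays_span_face
    {V : Type*} [AddCommGroup V] [Module ℚ V] [FiniteDimensional ℚ V]
    (Γ : AddSubmonoid V) (hΓfg : Γ.FG)
    (hspan : Submodule.span ℚ (Γ : Set V) = ⊤)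
    (K : Set (Module.Dual ℚ V))
    (hK : K = {ξ : Module.Dual ℚ V | ∀ γ ∈ Γ, 0 ≤ ξ γ})
    (ρ₁ ρ₂ : Module.Dual ℚ V)
    (h₁ : IsExtremalRayGen K ρ₁) (h₂ : IsExtremalRayGen K ρ₂)
    (hne : rayGen ρ₁ ≠ rayGen ρ₂)
    (α : V) (hα₁ : ρ₁ α = 1) (hα₂ : ρ₂ α = 1)
    (hother : ∀ ρ : Module.Dual ℚ V, IsExtremalRayGen K ρ →
      rayGen ρ ≠ rayGen ρ₁ → rayGen ρ ≠ rayGen ρ₂ → ρ α ≤ 0) :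
    ∃ ν ∈ qCone Γ,
      {ξ : Module.Dual ℚ V | ∃ c₁ c₂ : ℚ, 0 ≤ c₁ ∧ 0 ≤ c₂ ∧ ξ = c₁ • ρ₁ + c₂ • ρ₂}
        = {ξ ∈ K | ξ ν = 0} := by
  classical
  obtain ⟨S, hS⟩ := hΓfg
  set m := S.card with hm
  set g : Fin m → V := fun i => ((S.equivFin.symm i : S) : V) with hgdef
  have hgΓ : ∀ i, g i ∈ Γ := by
    intro i
    rw [← hS]
    exact AddSubmonoid.subset_closure (S.equivFin.symm i).2
  have hrange : Set.range g = (S : Set V) := by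
    ext x
    constructor
    · rintro ⟨i, rfl⟩; exact (S.equivFin.symm i).2
    · intro hx
      exact ⟨S.equivFin ⟨x, hx⟩, by simp [hgdef]⟩
  have hgspan : Submodule.span ℚ (Set.range g) = ⊤ := by
    rw [hrange]
    apply top_unique
    rw [← hspan]
    apply Submodule.span_le.mpr
    intro x hx
    have hx' : x ∈ AddSubmonoid.closure (S : Set V) := hS ▸ hx
    refine AddSubmonoid.closure_induction ?_ ?_ ?_ hx'
    · intro y hy; exact Submodule.subset_span hy
    · exact Submodule.zero_mem _
    · intro a b _ _ ha hb; exact Submodule.add_mem _ ha hb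
  have hKeq : K = Kg g := by
    rw [hK]
    ext ξ
    constructor
    · intro hξ i; exact hξ (g i) (hgΓ i)
    · intro hξ γ hγ
      have hγ' : γ ∈ AddSubmonoid.closure (S : Set V) := hS ▸ hγ
      refine AddSubmonoid.closure_induction ?_ ?_ ?_ hγ'
      · intro y hy
        have hyg : y = g (S.equivFin ⟨y, hy⟩) := by simp [hgdef]
        rw [hyg]; exact hξ _
      · simp
      · intro a b _ _ ha hb; rw [map_add]; linarith
  rw [hKeq] at h₁ h₂ hother
  have hrayc : ∀ ρ ρ' : Module.Dual ℚ V, rayGen ρ = rayGen ρ' →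
      ∃ c : ℚ, 0 ≤ c ∧ ρ = c • ρ' := by
    intro ρ ρ' hrr
    have : ρ ∈ rayGen ρ' := hrr ▸ self_mem_rayGen ρ
    exact this
  have hbeta : ∀ ρ ρ' : Module.Dual ℚ V, IsExtremalRayGen (Kg g) ρ →
      IsExtremalRayGen (Kg g) ρ' → ρ α = 1 → ρ' α = 1 → rayGen ρ ≠ rayGen ρ' →
      ∃ i, ρ' (g i) < ρ (g i) := by
    intro ρ ρ' hρ hρ' hρα hρ'α hrne
    by_contra hcon
    push_neg at hcon
    have hmem : ρ' - ρ ∈ Kg g := fun i => by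
      simp only [LinearMap.sub_apply]
      linarith [hcon i]
    have h3 := (hρ'.2.2 ρ hρ.1 (ρ' - ρ) hmem
      (by rw [add_sub_cancel]; exact self_mem_rayGen ρ')).1
    obtain ⟨c, hc, hcρ⟩ := h3
    have hc1 : c = 1 := by
      have := congrArg (fun η : Module.Dual ℚ V => η α) hcρ
      simp only [LinearMap.smul_apply, smul_eq_mul, hρα, hρ'α, mul_one] at this
      linarith
    apply hrne
    rw [hcρ, hc1, one_smul]
  obtain ⟨iA, hiA⟩ := hbeta ρ₁ ρ₂ h₁ h₂ hα₁ hα₂ hne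
  obtain ⟨iB, hiB⟩ := hbeta ρ₂ ρ₁ h₂ h₁ hα₂ hα₁ (Ne.symm hne)
  set γs : V := ∑ i, g i with hγs
  have hγpos : ∀ ξ : Module.Dual ℚ V, ξ ∈ Kg g → ξ ≠ 0 → 0 < ξ γs := by
    intro ξ hξ hξne
    rw [hγs, map_sum]
    obtain ⟨i0, hi0⟩ := exists_pos_eval hgspan hξ hξne
    exact Finset.sum_pos' (fun i _ => hξ i) ⟨i0, Finset.mem_univ _, hi0⟩
  have hγnn : ∀ ξ : Module.Dual ℚ V, ξ ∈ Kg g → 0 ≤ ξ γs := by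
    intro ξ hξ
    rw [hγs, map_sum]
    exact Finset.sum_nonneg fun i _ => hξ i
  have hchoice : ∃ (sc : ℚ) (i0 : Fin m), 0 ≤ sc ∧
      ρ₁ (γs + sc • g i0) = ρ₂ (γs + sc • g i0) := by
    rcases lt_trichotomy (ρ₁ γs) (ρ₂ γs) with hlt | heq | hgt
    · have hden : ρ₁ (g iA) - ρ₂ (g iA) ≠ 0 := by linarith
      refine ⟨(ρ₂ γs - ρ₁ γs) / (ρ₁ (g iA) - ρ₂ (g iA)), iA, ?_, ?_⟩
      · apply le_of_lt; apply div_pos <;> linarith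
      · simp only [map_add, map_smul, smul_eq_mul]
        field_simp
        ring
    · exact ⟨0, iA, le_refl 0, by simp [heq]⟩
    · have hden : ρ₂ (g iB) - ρ₁ (g iB) ≠ 0 := by linarith
      refine ⟨(ρ₁ γs - ρ₂ γs) / (ρ₂ (g iB) - ρ₁ (g iB)), iB, ?_, ?_⟩
      · apply le_of_lt; apply div_pos <;> linarith
      · simp only [map_add, map_smul, smul_eq_mul]
        field_simp
        ring
  obtain ⟨sc, i0, hsc, hbal⟩ := hchoice
  set ν0 : V := γs + sc • g i0 with hν0
  set μ : ℚ := ρ₁ ν0 with hμ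
  have hμnn : 0 ≤ μ := by
    rw [hμ, hν0, map_add, map_smul, smul_eq_mul]
    have h1 := hγnn ρ₁ h₁.1
    have h2 := mul_nonneg hsc (h₁.1 i0)
    linarith
  set ν : V := ν0 - μ • α with hν
  have hνnn0 : ∀ ξ : Module.Dual ℚ V, ξ ∈ Kg g → 0 ≤ ξ ν0 := by
    intro ξ hξ
    rw [hν0, map_add, map_smul, smul_eq_mul]
    have h1 := hγnn ξ hξ
    have h2 := mul_nonneg hsc (hξ i0)
    linarith
  have hρ₁ν : ρ₁ ν = 0 := by
    rw [hν, map_sub, map_smul, hα₁, ← hμ]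
    simp
  have hρ₂ν : ρ₂ ν = 0 := by
    rw [hν, map_sub, map_smul, hα₂, ← hbal]
    simp
  have hνext : ∀ ρ : Module.Dual ℚ V, IsExtremalRayGen (Kg g) ρ → 0 ≤ ρ ν ∧
      (rayGen ρ ≠ rayGen ρ₁ → rayGen ρ ≠ rayGen ρ₂ → 0 < ρ ν) := by
    intro ρ hρ
    by_cases hr1 : rayGen ρ = rayGen ρ₁
    · obtain ⟨c, hc, rfl⟩ := hrayc ρ ρ₁ hr1
      refine ⟨?_, fun h _ => absurd hr1 h⟩
      simp [LinearMap.smul_apply, smul_eq_mul, hρ₁ν]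
    by_cases hr2 : rayGen ρ = rayGen ρ₂
    · obtain ⟨c, hc, rfl⟩ := hrayc ρ ρ₂ hr2
      refine ⟨?_, fun _ h => absurd hr2 h⟩
      simp [LinearMap.smul_apply, smul_eq_mul, hρ₂ν]
    · have hle := hother ρ hρ hr1 hr2
      have hpos : 0 < ρ ν := by
        rw [hν, map_sub, map_smul, smul_eq_mul]
        have h2 : 0 < ρ γs := hγpos ρ hρ.1 hρ.2.1
        have h4 : ρ ν0 = ρ γs + sc * ρ (g i0) := by
          rw [hν0, map_add, map_smul, smul_eq_mul]
        nlinarith [mul_nonneg hsc (hρ.1 i0), mul_nonneg hμnn (neg_nonneg.mpr hle)]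
      exact ⟨hpos.le, fun _ _ => hpos⟩
  have hνM : ∀ η, η ∈ Mg g → 0 ≤ η ν := by
    intro η hη
    induction hη using AddSubmonoid.closure_induction with
    | mem ρ hρ => exact (hνext ρ hρ).1
    | zero => simp
    | add a b _ _ ha hb =>
      rw [LinearMap.add_apply]
      linarith
  have hνK : ∀ ξ : Module.Dual ℚ V, ξ ∈ Kg g → 0 ≤ ξ ν :=
    fun ξ hξ => hνM ξ (decompose hgspan ξ hξ)
  have hνq : ν ∈ qCone Γ := by
    obtain ⟨lam, hlam, hsum⟩ := farkas m g ν (fun ξ hξ => hνK ξ hξ)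
    refine ⟨Finset.univ.image g,
      fun x => ∑ i ∈ Finset.univ.filter (fun i => g i = x), lam i, ?_, ?_⟩
    · intro x hx
      obtain ⟨i, _, rfl⟩ := Finset.mem_image.mp hx
      exact ⟨hgΓ i, Finset.sum_nonneg fun j _ => hlam j⟩
    · rw [hsum]
      rw [← Finset.sum_fiberwise_of_maps_to
        (fun i _ => Finset.mem_image_of_mem g (Finset.mem_univ i)) (fun i => lam i • g i)]
      apply Finset.sum_congr rfl
      intro x hx
      rw [Finset.sum_smul]
      apply Finset.sum_congr rfl
      intro i hi
      have hgi : g i = x := (Finset.mem_filter.mp hi).2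
      rw [hgi]
  refine ⟨ν, hνq, ?_⟩
  ext ξ
  simp only [Set.mem_setOf_eq, Set.mem_sep_iff]
  constructor
  · rintro ⟨c₁, c₂, hc₁, hc₂, rfl⟩
    constructor
    · rw [hKeq]
      intro i
      have h5 := h₁.1 i
      have h6 := h₂.1 i
      simp only [LinearMap.add_apply, LinearMap.smul_apply, smul_eq_mul]
      nlinarith
    · simp [LinearMap.add_apply, LinearMap.smul_apply, smul_eq_mul, hρ₁ν, hρ₂ν]
  · rintro ⟨hξK, hξν⟩
    rw [hKeq] at hξK
    have hξM : ξ ∈ Mg g := decompose hgspan ξ hξK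
    have main : ∀ η, η ∈ Mg g → 0 ≤ η ν ∧ (η ν = 0 →
        ∃ c₁ c₂ : ℚ, 0 ≤ c₁ ∧ 0 ≤ c₂ ∧ η = c₁ • ρ₁ + c₂ • ρ₂) := by
      intro η hη
      induction hη using AddSubmonoid.closure_induction with
      | mem ρ hρ =>
        refine ⟨(hνext ρ hρ).1, ?_⟩
        intro h0
        by_cases hr1 : rayGen ρ = rayGen ρ₁
        · obtain ⟨c, hc, rfl⟩ := hrayc ρ ρ₁ hr1
          exact ⟨c, 0, hc, le_refl 0, by simp⟩
        by_cases hr2 : rayGen ρ = rayGen ρ₂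
        · obtain ⟨c, hc, rfl⟩ := hrayc ρ ρ₂ hr2
          exact ⟨0, c, le_refl 0, hc, by simp⟩
        · exact absurd h0 (ne_of_gt ((hνext ρ hρ).2 hr1 hr2))
      | zero =>
        refine ⟨by simp, fun _ => ⟨0, 0, le_refl 0, le_refl 0, by simp⟩⟩
      | add a b ha' hb' ha hb =>
        obtain ⟨han, haz⟩ := ha
        obtain ⟨hbn, hbz⟩ := hb
        constructor
        · rw [LinearMap.add_apply]
          linarith
        · intro h0
          rw [LinearMap.add_apply] at h0
          have ha0 : a ν = 0 := by linarith
          have hb0 : b ν = 0 := by linarith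
          obtain ⟨c₁, c₂, hd1, hd2, rfl⟩ := haz ha0
          obtain ⟨d₁, d₂, hd3, hd4, rfl⟩ := hbz hb0
          exact ⟨c₁ + d₁, c₂ + d₂, by linarith, by linarith, by rw [add_smul, add_smul]; abel⟩
    exact (main ξ hξM).2 hξν
end

section
/- Let Γ be a finitely generated submonoid of a finitely generated free abelian group Λ with ℤΓ = Λ, and let K be the dual cone. Let α ∈ Λ ⊗_ℤ ℚ and φ ∈ K with φ(α) = 2, and let ρ0 be an extremal ray generator of K such that ρ0(α) = 1 and ρ(α) ≤ 0 for every extremal ray generator ρ of K with ℚ≥0·ρ ≠ ℚ≥0·ρ0. Then φ − ρ0 ∈ K, i.e. (φ − ρ0)(γ) ≥ 0 for every γ ∈ Γ. -/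
section Aux

variable {V : Type*} [AddCommGroup V] [Module ℚ V] [FiniteDimensional ℚ V]

/-- The dual cone of a finite set of vectors. -/
def auxKset (T : Finset V) : Set (Module.Dual ℚ V) := {ξ | ∀ s ∈ T, 0 ≤ ξ s}

/-- The cone hull of the extremal ray generators of the dual cone of `T`. -/
def auxC (T : Finset V) : AddSubmonoid (Module.Dual ℚ V) :=
  AddSubmonoid.closure {x | ∃ ρ, IsExtremalRayGen (auxKset T) ρ ∧ x ∈ rayGen ρ}

lemma auxC_smul {T : Finset V} {c : ℚ} (hc : 0 ≤ c) {x} (hx : x ∈ auxC T) :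
    c • x ∈ auxC T := by
  refine AddSubmonoid.closure_induction (motive := fun x _ => c • x ∈ auxC T) ?_ ?_ ?_ hx
  · rintro y ⟨ρ, hρ, d, hd, rfl⟩
    exact AddSubmonoid.subset_closure ⟨ρ, hρ, c * d, mul_nonneg hc hd, smul_smul c d ρ⟩
  · simpa using (auxC T).zero_mem
  · intro a b _ _ ha hb
    rw [smul_add]
    exact add_mem ha hb

/-- The space of directions vanishing on the tight constraints of `ξ` and on `∑ T`. -/
def auxL (T : Finset V) (ξ : Module.Dual ℚ V) : Submodule ℚ (Module.Dual ℚ V) where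
  carrier := {η | η (∑ s ∈ T, s) = 0 ∧ ∀ s ∈ T, ξ s = 0 → η s = 0}
  add_mem' := by
    rintro a b ⟨ha1, ha2⟩ ⟨hb1, hb2⟩
    exact ⟨by rw [LinearMap.add_apply, ha1, hb1, add_zero],
      fun s hs h => by rw [LinearMap.add_apply, ha2 s hs h, hb2 s hs h, add_zero]⟩
  zero_mem' := by simp
  smul_mem' := by
    rintro c a ⟨ha1, ha2⟩
    exact ⟨by rw [LinearMap.smul_apply, ha1, smul_zero],
      fun s hs h => by rw [LinearMap.smul_apply, ha2 s hs h, smul_zero]⟩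

lemma aux_eq_zero {T : Finset V} (hT : Submodule.span ℚ (T : Set V) = ⊤)
    {η : Module.Dual ℚ V} (h : ∀ s ∈ T, η s = 0) : η = 0 :=
  LinearMap.ext_on hT (by intro x hx; simpa using h x hx)

lemma auxstep {T : Finset V} {ξ u : Module.Dual ℚ V}
    (hξ : ∀ s ∈ T, 0 ≤ ξ s) (hu : u ∈ auxL T ξ)
    (hneg : ∃ s ∈ T, u s < 0) :
    ∃ t : ℚ, 0 < t ∧ (∀ s ∈ T, 0 ≤ (ξ + t • u) s) ∧ auxL T (ξ + t • u) < auxL T ξ := by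
  obtain ⟨hu1, hu2⟩ := hu
  obtain ⟨s₁, hs₁T, hs₁⟩ := hneg
  have hne : (T.filter (fun s => u s < 0)).Nonempty :=
    ⟨s₁, Finset.mem_filter.mpr ⟨hs₁T, hs₁⟩⟩
  obtain ⟨a, haT', hamin⟩ := (T.filter (fun s => u s < 0)).exists_min_image
    (fun s => ξ s / (-(u s))) hne
  obtain ⟨haT, hua⟩ := Finset.mem_filter.mp haT'
  have hξa : 0 < ξ a := by
    rcases (hξ a haT).lt_or_eq with h | h
    · exact h
    · exact absurd (hu2 a haT h.symm) (ne_of_lt hua)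
  set t := ξ a / (-(u a)) with ht_def
  have ht : 0 < t := div_pos hξa (neg_pos.mpr hua)
  have hzero_pres : ∀ s ∈ T, ξ s = 0 → (ξ + t • u) s = 0 := by
    intro s hs h
    simp [h, hu2 s hs h]
  have hnew : (ξ + t • u) a = 0 := by
    have hne' : -(u a) ≠ 0 := ne_of_gt (neg_pos.mpr hua)
    simp only [LinearMap.add_apply, LinearMap.smul_apply, smul_eq_mul, ht_def]
    field_simp
    simp [div_self hua.ne]
  refine ⟨t, ht, ?_, ?_⟩
  · intro s hs
    by_cases hus : u s < 0
    · have hmin := hamin s (Finset.mem_filter.mpr ⟨hs, hus⟩)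
      have h2 : t * (-(u s)) ≤ ξ s := by
        rw [ht_def]
        exact (le_div_iff₀ (neg_pos.mpr hus)).mp hmin
      simp only [LinearMap.add_apply, LinearMap.smul_apply, smul_eq_mul]
      linarith
    · push_neg at hus
      have : 0 ≤ t * u s := mul_nonneg ht.le hus
      simp only [LinearMap.add_apply, LinearMap.smul_apply, smul_eq_mul]
      linarith [hξ s hs]
  · rw [SetLike.lt_iff_le_and_exists]
    constructor
    · rintro η ⟨h1, h2⟩
      exact ⟨h1, fun s hs h => h2 s hs (hzero_pres s hs h)⟩
    · refine ⟨u, ⟨hu1, hu2⟩, fun hmem => ?_⟩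
      exact absurd (hmem.2 a haT hnew) (ne_of_lt hua)

lemma auxdecomp {T : Finset V} (hT : Submodule.span ℚ (T : Set V) = ⊤) :
    ∀ n : ℕ, ∀ ξ : Module.Dual ℚ V, Module.finrank ℚ (auxL T ξ) = n →
      (∀ s ∈ T, 0 ≤ ξ s) → ξ ∈ auxC T := by
  intro n
  induction n using Nat.strong_induction_on with
  | _ n ih =>
  intro ξ hrank hξ
  by_cases h0 : ξ = 0
  · subst h0; exact (auxC T).zero_mem
  by_cases hL : auxL T ξ = ⊥
  · -- `ξ` is itself an extremal ray generator
    have hgpos : 0 < ξ (∑ s ∈ T, s) := by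
      rw [map_sum]
      rcases (Finset.sum_nonneg (fun s hs => hξ s hs)).lt_or_eq with h | h
      · exact h
      · exfalso
        exact h0 (aux_eq_zero hT
          ((Finset.sum_eq_zero_iff_of_nonneg (fun s hs => hξ s hs)).mp h.symm))
    have key : ∀ z ∈ auxKset T, (∀ s ∈ T, ξ s = 0 → z s = 0) → z ∈ rayGen ξ := by
      intro z hz1 hz2
      have hzg : 0 ≤ z (∑ s ∈ T, s) := by
        rw [map_sum]; exact Finset.sum_nonneg (fun s hs => hz1 s hs)
      set d := z (∑ s ∈ T, s) / ξ (∑ s ∈ T, s) with hd_def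
      have hmem : z - d • ξ ∈ auxL T ξ := by
        constructor
        · simp only [LinearMap.sub_apply, LinearMap.smul_apply, smul_eq_mul, hd_def]
          rw [div_mul_cancel₀ _ hgpos.ne', sub_self]
        · intro s hs h
          simp [hz2 s hs h, h]
      rw [hL, Submodule.mem_bot, sub_eq_zero] at hmem
      exact ⟨d, div_nonneg hzg hgpos.le, hmem⟩
    have hext : IsExtremalRayGen (auxKset T) ξ := by
      refine ⟨hξ, h0, ?_⟩
      rintro x hx y hy ⟨c, hc, hxy⟩
      have hz : ∀ s ∈ T, ξ s = 0 → x s = 0 ∧ y s = 0 := by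
        intro s hs h
        have h' : x s + y s = c * ξ s := by
          have := congrArg (fun f : Module.Dual ℚ V => f s) hxy
          simpa using this
        rw [h, mul_zero] at h'
        constructor <;> linarith [hx s hs, hy s hs]
      exact ⟨key x hx (fun s hs h => (hz s hs h).1),
             key y hy (fun s hs h => (hz s hs h).2)⟩
    exact AddSubmonoid.subset_closure ⟨ξ, hext, 1, zero_le_one, (one_smul ℚ ξ).symm⟩
  · -- split `ξ` along a direction `u`
    obtain ⟨u, huL, hune⟩ := Submodule.exists_mem_ne_zero_of_ne_bot hL
    have husum : ∑ s ∈ T, u s = 0 := by rw [← map_sum]; exact huL.1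
    have hneg : ∃ s ∈ T, u s < 0 := by
      by_contra h
      push_neg at h
      exact hune (aux_eq_zero hT ((Finset.sum_eq_zero_iff_of_nonneg h).mp husum))
    have hpos : ∃ s ∈ T, 0 < u s := by
      by_contra h
      push_neg at h
      refine hune (aux_eq_zero hT ?_)
      have h' : ∀ s ∈ T, 0 ≤ -(u s) := fun s hs => neg_nonneg.mpr (h s hs)
      have hsum' : ∑ s ∈ T, -(u s) = 0 := by rw [Finset.sum_neg_distrib, husum, neg_zero]
      intro s hs
      have := (Finset.sum_eq_zero_iff_of_nonneg h').mp hsum' s hs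
      linarith
    obtain ⟨t₁, ht₁, hK₁, hL₁⟩ := auxstep hξ huL hneg
    obtain ⟨t₂, ht₂, hK₂, hL₂⟩ := auxstep hξ (neg_mem huL)
      (by obtain ⟨s, hs, h⟩ := hpos; exact ⟨s, hs, by simpa using h⟩)
    have hsum : 0 < t₁ + t₂ := by linarith
    have hcomb : ξ = (t₂ / (t₁ + t₂)) • (ξ + t₁ • u) + (t₁ / (t₁ + t₂)) • (ξ + t₂ • (-u)) := by
      have hne := hsum.ne'
      match_scalars <;> field_simp <;> ring
    have hr₁ : Module.finrank ℚ (auxL T (ξ + t₁ • u)) < n := by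
      rw [← hrank]; exact Submodule.finrank_lt_finrank_of_lt hL₁
    have hr₂ : Module.finrank ℚ (auxL T (ξ + t₂ • (-u))) < n := by
      rw [← hrank]; exact Submodule.finrank_lt_finrank_of_lt hL₂
    rw [hcomb]
    exact add_mem
      (auxC_smul (div_nonneg ht₂.le hsum.le) (ih _ hr₁ _ rfl hK₁))
      (auxC_smul (div_nonneg ht₁.le hsum.le) (ih _ hr₂ _ rfl hK₂))

end Aux

theorem sub_extremal_ray_mem_dual_cone
    {V : Type*} [AddCommGroup V] [Module ℚ V] [FiniteDimensional ℚ V]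
    (Γ : AddSubmonoid V) (hΓfg : Γ.FG)
    (hspan : Submodule.span ℚ (Γ : Set V) = ⊤)
    (K : Set (Module.Dual ℚ V))
    (hK : K = {ξ : Module.Dual ℚ V | ∀ γ ∈ Γ, 0 ≤ ξ γ})
    (α : V) (φ : Module.Dual ℚ V) (hφK : φ ∈ K) (hφα : φ α = 2)
    (ρ₀ : Module.Dual ℚ V)
    (h₀ : IsExtremalRayGen K ρ₀) (hρ₀α : ρ₀ α = 1)
    (hother : ∀ ρ : Module.Dual ℚ V, IsExtremalRayGen K ρ →
      rayGen ρ ≠ rayGen ρ₀ → ρ α ≤ 0) :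
    ∀ γ ∈ Γ, 0 ≤ (φ - ρ₀) γ := by
  obtain ⟨T, hTΓ⟩ := hΓfg
  have hTsub : (T : Set V) ⊆ (Γ : Set V) := hTΓ ▸ AddSubmonoid.subset_closure
  have hKeq : K = auxKset T := by
    rw [hK]
    ext ξ
    constructor
    · intro h s hs
      exact h s (hTsub hs)
    · intro h γ hγ
      rw [← hTΓ] at hγ
      refine AddSubmonoid.closure_induction (motive := fun x _ => 0 ≤ ξ x) ?_ ?_ ?_ hγ
      · exact fun x hx => h x hx
      · simp
      · intro x y _ _ hx hy
        rw [map_add]; linarith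
  have hTspan : Submodule.span ℚ (T : Set V) = ⊤ := by
    refine le_antisymm le_top ?_
    rw [← hspan]
    refine Submodule.span_le.mpr ?_
    intro γ hγ
    rw [← hTΓ] at hγ
    exact AddSubmonoid.closure_le.mpr
      (fun x hx => Submodule.subset_span hx : (T : Set V) ⊆ ((Submodule.span ℚ (T : Set V)).toAddSubmonoid : Set V)) hγ
  have hφK' : ∀ s ∈ T, 0 ≤ φ s := by rw [hKeq] at hφK; exact hφK
  have hφC : φ ∈ auxC T := auxdecomp hTspan _ φ rfl hφK'
  have hQ : ∃ c : ℚ, 0 ≤ c ∧ φ α ≤ c ∧ ∀ γ ∈ Γ, 0 ≤ (φ - c • ρ₀) γ := by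
    refine AddSubmonoid.closure_induction
      (motive := fun x _ => ∃ c : ℚ, 0 ≤ c ∧ x α ≤ c ∧ ∀ γ ∈ Γ, 0 ≤ (x - c • ρ₀) γ) ?_ ?_ ?_ hφC
    · rintro x ⟨ρ, hρ, d, hd, rfl⟩
      have hρK : IsExtremalRayGen K ρ := by rw [hKeq]; exact hρ
      by_cases hray : rayGen ρ = rayGen ρ₀
      · have hρmem : ρ ∈ rayGen ρ₀ := hray ▸ ⟨1, zero_le_one, (one_smul ℚ ρ).symm⟩
        obtain ⟨e, he, rfl⟩ := hρmem
        refine ⟨d * e, mul_nonneg hd he, ?_, ?_⟩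
        · simp [smul_smul, hρ₀α]
        · intro γ hγ
          simp [smul_smul]
      · have hρα : ρ α ≤ 0 := hother ρ hρK hray
        have hρΓ : ∀ γ ∈ Γ, 0 ≤ ρ γ := by
          have := hρK.1
          rw [hK] at this
          exact this
        refine ⟨0, le_refl 0, ?_, ?_⟩
        · simp only [LinearMap.smul_apply, smul_eq_mul]
          have := mul_nonneg hd (neg_nonneg.mpr hρα)
          linarith
        · intro γ hγ
          simp only [zero_smul, sub_zero, LinearMap.smul_apply, smul_eq_mul]
          exact mul_nonneg hd (hρΓ γ hγ)
    · exact ⟨0, le_refl 0, by simp, by simp⟩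
    · rintro x y _ _ ⟨c₁, h1, h2, h3⟩ ⟨c₂, h4, h5, h6⟩
      refine ⟨c₁ + c₂, by linarith, by simp only [LinearMap.add_apply]; linarith, ?_⟩
      intro γ hγ
      have hx := h3 γ hγ
      have hy := h6 γ hγ
      simp only [LinearMap.sub_apply, LinearMap.add_apply, LinearMap.smul_apply,
        smul_eq_mul] at *
      linarith
  obtain ⟨c, hc0, hc2, hcK⟩ := hQ
  rw [hφα] at hc2
  intro γ hγ
  have h1 := hcK γ hγ
  have h2 : 0 ≤ ρ₀ γ := by
    have := h₀.1
    rw [hK] at this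
    exact this γ hγ
  simp only [LinearMap.sub_apply, LinearMap.smul_apply, smul_eq_mul] at h1 ⊢
  nlinarith
end
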